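/- If the conditional distribution q_{0|y}(· | y) of X given Y = y factorizes across positions for q^Y-almost every y, i.e., q_{0|y}(x | y) = ∏_{i=1}^S q^i_{0|y}(x^i | y), then for the masked forward chain the conditional reverse transitions q_{t−1|t,y}(· | x_t, y) also factorize across positions for every t. -/
import Mathlib


open Finset

/-- Single-token masked forward kernel: the mask is absorbing; a non-masked token is kept with
probability `γt` and replaced by the mask with probability `1 − γt`. -/
def tokStep {K : ℕ} (γt : ℝ) (msk a b : Fin K) : ℝ :=
  if a = msk then (if b = msk then 1 else 0)
  else γt * (if b = a then 1 else 0) + (1 - γt) * (if b = msk then 1 else 0)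

/-- Masked forward kernel on sequences: coordinates are noised independently. -/
def seqStep {K S : ℕ} (γt : ℝ) (msk : Fin K) (a b : Fin S → Fin K) : ℝ :=
  ∏ i, tokStep γt msk (a i) (b i)

/-- Joint weight of `(Y = y, X_{0:T} = x)` for the masked chain started from `q₀(·, y)`. -/
noncomputable def yQpath {K S T : ℕ} {β : Type*} (γ : Fin T → ℝ) (msk : Fin K)
    (q0 : (Fin S → Fin K) × β → ℝ) (y : β) (x : Fin (T + 1) → (Fin S → Fin K)) : ℝ :=
  q0 (x 0, y) * ∏ t : Fin T, seqStep (γ t) msk (x t.castSucc) (x t.succ)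

/-- Joint weight of `(Y = y, X_u = b)`. -/
noncomputable def yMarg {K S T : ℕ} {β : Type*} (γ : Fin T → ℝ) (msk : Fin K)
    (q0 : (Fin S → Fin K) × β → ℝ) (u : Fin (T + 1)) (y : β) (b : Fin S → Fin K) : ℝ :=
  ∑ x : Fin (T + 1) → (Fin S → Fin K), if x u = b then yQpath γ msk q0 y x else 0

/-- Joint weight of `(Y = y, X_t = a, X_{t+1} = b)`. -/
noncomputable def yJoint {K S T : ℕ} {β : Type*} (γ : Fin T → ℝ) (msk : Fin K)
    (q0 : (Fin S → Fin K) × β → ℝ) (t : Fin T) (y : β) (a b : Fin S → Fin K) : ℝ :=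
  ∑ x : Fin (T + 1) → (Fin S → Fin K),
    if x t.castSucc = a ∧ x t.succ = b then yQpath γ msk q0 y x else 0

lemma tok_row {K : ℕ} (γt : ℝ) (msk a : Fin K) : ∑ b, tokStep γt msk a b = 1 := by
  have : Nonempty (Fin K) := ⟨msk⟩
  unfold tokStep
  by_cases h : a = msk
  · simp [h]
  · simp [h, Finset.sum_add_distrib, ← Finset.mul_sum]

lemma seq_row {K S : ℕ} (γt : ℝ) (msk : Fin K) (a : Fin S → Fin K) :
    ∑ b : Fin S → Fin K, seqStep γt msk a b = 1 := by
  unfold seqStep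
  rw [← Fintype.prod_sum fun i v => tokStep γt msk (a i) v]
  simp [tok_row]

lemma sum_snoc {σ : Type*} [Fintype σ] {n : ℕ} (f : (Fin (n + 1) → σ) → ℝ) :
    ∑ x : Fin (n + 1) → σ, f x = ∑ p : Fin n → σ, ∑ c : σ, f (Fin.snoc p c) := by
  calc ∑ x : Fin (n + 1) → σ, f x
      = ∑ q : (Fin n → σ) × σ, f (Fin.snoc q.1 q.2) :=
        (Fintype.sum_equiv
          ⟨fun q => Fin.snoc q.1 q.2, fun x => (Fin.init x, x (Fin.last n)),
           fun q => by simp, fun x => Fin.snoc_init_self x⟩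
          (fun q : (Fin n → σ) × σ => f (Fin.snoc q.1 q.2)) f (fun q => rfl)).symm
    _ = ∑ p : Fin n → σ, ∑ c : σ, f (Fin.snoc p c) := Fintype.sum_prod_type _

lemma yQpath_snoc {K S T : ℕ} {β : Type*} (γ : Fin (T + 1) → ℝ) (msk : Fin K)
    (q0 : (Fin S → Fin K) × β → ℝ) (y : β) (p : Fin (T + 1) → (Fin S → Fin K))
    (c : Fin S → Fin K) :
    yQpath γ msk q0 y (Fin.snoc p c) =
      yQpath (γ ∘ Fin.castSucc) msk q0 y p *
        seqStep (γ (Fin.last T)) msk (p (Fin.last T)) c := by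
  unfold yQpath
  rw [Fin.prod_univ_castSucc]
  have h0 : (Fin.snoc p c : Fin (T + 2) → (Fin S → Fin K)) 0 = p 0 := by
    rw [show (0 : Fin (T + 2)) = Fin.castSucc 0 from rfl, Fin.snoc_castSucc]
  simp only [h0, Fin.succ_castSucc, Fin.snoc_castSucc, Fin.succ_last, Fin.snoc_last,
    Function.comp_apply]
  ring

def gext (T : ℕ) (γ : Fin T → ℝ) (n : ℕ) : ℝ := if h : n < T then γ ⟨n, h⟩ else 0

noncomputable def tokA {K : ℕ} (γn : ℕ → ℝ) (msk : Fin K) (r0 : Fin K → ℝ) : ℕ → Fin K → ℝ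
  | 0, v => r0 v
  | n + 1, v => ∑ u, tokA γn msk r0 n u * tokStep (γn n) msk u v

noncomputable def seqA {K S : ℕ} {β : Type*} (γn : ℕ → ℝ) (msk : Fin K)
    (q0 : (Fin S → Fin K) × β → ℝ) (y : β) : ℕ → (Fin S → Fin K) → ℝ
  | 0, b => q0 (b, y)
  | n + 1, b => ∑ a, seqA γn msk q0 y n a * seqStep (γn n) msk a b

lemma seqA_congr {K S : ℕ} {β : Type*} (γ1 γ2 : ℕ → ℝ) (msk : Fin K)
    (q0 : (Fin S → Fin K) × β → ℝ) (y : β) :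
    ∀ n, (∀ k, k < n → γ1 k = γ2 k) → ∀ b, seqA γ1 msk q0 y n b = seqA γ2 msk q0 y n b := by
  intro n
  induction n with
  | zero => intro _ b; rfl
  | succ n ih =>
    intro h b
    show (∑ a, seqA γ1 msk q0 y n a * seqStep (γ1 n) msk a b)
        = ∑ a, seqA γ2 msk q0 y n a * seqStep (γ2 n) msk a b
    refine Finset.sum_congr rfl fun a _ => ?_
    rw [ih (fun k hk => h k (hk.trans (Nat.lt_succ_self n))) a, h n (Nat.lt_succ_self n)]

lemma gext_castSucc {T : ℕ} (γ : Fin (T + 1) → ℝ) :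
    ∀ k, k < T → gext T (γ ∘ Fin.castSucc) k = gext (T + 1) γ k := by
  intro k hk
  simp [gext, hk, hk.trans (Nat.lt_succ_self T), Fin.castSucc]

lemma margA {K S : ℕ} {β : Type*} (msk : Fin K) (q0 : (Fin S → Fin K) × β → ℝ) :
    ∀ (T : ℕ) (γ : Fin T → ℝ) (u : Fin (T + 1)) (y : β) (b : Fin S → Fin K),
      yMarg γ msk q0 u y b = seqA (gext T γ) msk q0 y u.val b := by
  intro T
  induction T with
  | zero =>
    intro γ u y b
    have hu : u = 0 := Fin.eq_zero u
    subst hu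
    unfold yMarg yQpath
    rw [Finset.sum_eq_single (fun _ => b)]
    · simp [seqA]
    · intro x _ hx
      have hxb : x 0 ≠ b := fun h =>
        hx (funext fun i => by rw [Fin.eq_zero i, h])
      simp [hxb]
    · intro h; exact absurd (Finset.mem_univ _) h
  | succ T ih =>
    intro γ u y b
    unfold yMarg
    rw [sum_snoc]
    induction u using Fin.lastCases with
    | last =>
      have key : ∀ p : Fin (T + 1) → (Fin S → Fin K), ∀ c,
          (if (Fin.snoc p c : Fin (T + 2) → (Fin S → Fin K)) (Fin.last (T + 1)) = b
            then yQpath γ msk q0 y (Fin.snoc p c) else 0)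
          = if c = b then yQpath (γ ∘ Fin.castSucc) msk q0 y p *
              seqStep (γ (Fin.last T)) msk (p (Fin.last T)) c else 0 := by
        intro p c
        rw [Fin.snoc_last, yQpath_snoc]
      simp only [key]
      have step2 : ∀ p : Fin (T + 1) → (Fin S → Fin K),
          (∑ c, if c = b then yQpath (γ ∘ Fin.castSucc) msk q0 y p *
              seqStep (γ (Fin.last T)) msk (p (Fin.last T)) c else 0)
          = ∑ a, if p (Fin.last T) = a then
              yQpath (γ ∘ Fin.castSucc) msk q0 y p * seqStep (γ (Fin.last T)) msk a b else 0 := by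
        intro p
        rw [Finset.sum_ite_eq' Finset.univ b, Finset.sum_ite_eq Finset.univ (p (Fin.last T))]
        simp
      simp only [step2]
      rw [Finset.sum_comm]
      have step3 : ∀ a : Fin S → Fin K,
          (∑ p : Fin (T + 1) → (Fin S → Fin K), if p (Fin.last T) = a then
              yQpath (γ ∘ Fin.castSucc) msk q0 y p * seqStep (γ (Fin.last T)) msk a b else 0)
          = seqA (gext (T + 1) γ) msk q0 y T a * seqStep (γ (Fin.last T)) msk a b := by
        intro a
        have : (∑ p : Fin (T + 1) → (Fin S → Fin K), if p (Fin.last T) = a then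
              yQpath (γ ∘ Fin.castSucc) msk q0 y p * seqStep (γ (Fin.last T)) msk a b else 0)
            = (∑ p : Fin (T + 1) → (Fin S → Fin K), if p (Fin.last T) = a then
              yQpath (γ ∘ Fin.castSucc) msk q0 y p else 0) * seqStep (γ (Fin.last T)) msk a b := by
          rw [Finset.sum_mul]
          exact Finset.sum_congr rfl fun p _ => by rw [ite_mul, zero_mul]
        rw [this]
        have hm : (∑ p : Fin (T + 1) → (Fin S → Fin K), if p (Fin.last T) = a then
              yQpath (γ ∘ Fin.castSucc) msk q0 y p else 0)
            = yMarg (γ ∘ Fin.castSucc) msk q0 (Fin.last T) y a := rfl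
        rw [hm, ih (γ ∘ Fin.castSucc) (Fin.last T) y a, Fin.val_last,
          seqA_congr _ _ msk q0 y T (fun k hk => gext_castSucc γ k hk) a]
      simp only [step3]
      have hval : (Fin.last (T + 1)).val = T + 1 := rfl
      rw [hval]
      show _ = ∑ a, seqA (gext (T + 1) γ) msk q0 y T a * seqStep (gext (T + 1) γ T) msk a b
      have hg : gext (T + 1) γ T = γ (Fin.last T) := by
        simp [gext, Nat.lt_succ_self T, Fin.last]
      rw [hg]
    | cast u' =>
      have key : ∀ p : Fin (T + 1) → (Fin S → Fin K), ∀ c,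
          (if (Fin.snoc p c : Fin (T + 2) → (Fin S → Fin K)) (Fin.castSucc u') = b
            then yQpath γ msk q0 y (Fin.snoc p c) else 0)
          = if p u' = b then yQpath (γ ∘ Fin.castSucc) msk q0 y p *
              seqStep (γ (Fin.last T)) msk (p (Fin.last T)) c else 0 := by
        intro p c
        rw [Fin.snoc_castSucc, yQpath_snoc]
      simp only [key]
      have step2 : ∀ p : Fin (T + 1) → (Fin S → Fin K),
          (∑ c, if p u' = b then yQpath (γ ∘ Fin.castSucc) msk q0 y p *
              seqStep (γ (Fin.last T)) msk (p (Fin.last T)) c else 0)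
          = if p u' = b then yQpath (γ ∘ Fin.castSucc) msk q0 y p else 0 := by
        intro p
        by_cases h : p u' = b <;> simp [h, ← Finset.mul_sum, seq_row]
      simp only [step2]
      have hm : (∑ p : Fin (T + 1) → (Fin S → Fin K), if p u' = b then
            yQpath (γ ∘ Fin.castSucc) msk q0 y p else 0)
          = yMarg (γ ∘ Fin.castSucc) msk q0 u' y b := rfl
      rw [hm, ih (γ ∘ Fin.castSucc) u' y b]
      have hval : (Fin.castSucc u').val = u'.val := rfl
      rw [hval]
      exact seqA_congr _ _ msk q0 y u'.val
        (fun k hk => gext_castSucc γ k (hk.trans_le (Nat.lt_succ_iff.mp u'.isLt))) b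

lemma jointA {K S : ℕ} {β : Type*} (msk : Fin K) (q0 : (Fin S → Fin K) × β → ℝ) :
    ∀ (T : ℕ) (γ : Fin T → ℝ) (t : Fin T) (y : β) (a b : Fin S → Fin K),
      yJoint γ msk q0 t y a b = seqA (gext T γ) msk q0 y t.val a * seqStep (γ t) msk a b := by
  intro T
  induction T with
  | zero => intro γ t; exact t.elim0
  | succ T ih =>
    intro γ t y a b
    unfold yJoint
    rw [sum_snoc]
    induction t using Fin.lastCases with
    | last =>
      have key : ∀ p : Fin (T + 1) → (Fin S → Fin K), ∀ c,
          (if (Fin.snoc p c : Fin (T + 2) → (Fin S → Fin K)) (Fin.last T).castSucc = a ∧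
              (Fin.snoc p c : Fin (T + 2) → (Fin S → Fin K)) (Fin.last T).succ = b
            then yQpath γ msk q0 y (Fin.snoc p c) else 0)
          = if p (Fin.last T) = a ∧ c = b then yQpath (γ ∘ Fin.castSucc) msk q0 y p *
              seqStep (γ (Fin.last T)) msk (p (Fin.last T)) c else 0 := by
        intro p c
        rw [Fin.succ_last, Fin.snoc_last, Fin.snoc_castSucc, yQpath_snoc]
      simp only [key]
      have step2 : ∀ p : Fin (T + 1) → (Fin S → Fin K),
          (∑ c, if p (Fin.last T) = a ∧ c = b then yQpath (γ ∘ Fin.castSucc) msk q0 y p *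
              seqStep (γ (Fin.last T)) msk (p (Fin.last T)) c else 0)
          = if p (Fin.last T) = a then yQpath (γ ∘ Fin.castSucc) msk q0 y p *
              seqStep (γ (Fin.last T)) msk a b else 0 := by
        intro p
        by_cases h : p (Fin.last T) = a
        · simp [h]
        · simp [h]
      simp only [step2]
      have step3 : (∑ p : Fin (T + 1) → (Fin S → Fin K), if p (Fin.last T) = a then
            yQpath (γ ∘ Fin.castSucc) msk q0 y p * seqStep (γ (Fin.last T)) msk a b else 0)
          = (∑ p : Fin (T + 1) → (Fin S → Fin K), if p (Fin.last T) = a then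
            yQpath (γ ∘ Fin.castSucc) msk q0 y p else 0) * seqStep (γ (Fin.last T)) msk a b := by
        rw [Finset.sum_mul]
        exact Finset.sum_congr rfl fun p _ => by rw [ite_mul, zero_mul]
      rw [step3]
      have hm : (∑ p : Fin (T + 1) → (Fin S → Fin K), if p (Fin.last T) = a then
            yQpath (γ ∘ Fin.castSucc) msk q0 y p else 0)
          = yMarg (γ ∘ Fin.castSucc) msk q0 (Fin.last T) y a := rfl
      rw [hm, margA msk q0 T (γ ∘ Fin.castSucc) (Fin.last T) y a, Fin.val_last,
        seqA_congr _ _ msk q0 y T (fun k hk => gext_castSucc γ k hk) a]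
    | cast t' =>
      have key : ∀ p : Fin (T + 1) → (Fin S → Fin K), ∀ c,
          (if (Fin.snoc p c : Fin (T + 2) → (Fin S → Fin K)) t'.castSucc.castSucc = a ∧
              (Fin.snoc p c : Fin (T + 2) → (Fin S → Fin K)) t'.castSucc.succ = b
            then yQpath γ msk q0 y (Fin.snoc p c) else 0)
          = if p t'.castSucc = a ∧ p t'.succ = b then yQpath (γ ∘ Fin.castSucc) msk q0 y p *
              seqStep (γ (Fin.last T)) msk (p (Fin.last T)) c else 0 := by
        intro p c
        rw [Fin.succ_castSucc, Fin.snoc_castSucc, Fin.snoc_castSucc, yQpath_snoc]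
      simp only [key]
      have step2 : ∀ p : Fin (T + 1) → (Fin S → Fin K),
          (∑ c, if p t'.castSucc = a ∧ p t'.succ = b then yQpath (γ ∘ Fin.castSucc) msk q0 y p *
              seqStep (γ (Fin.last T)) msk (p (Fin.last T)) c else 0)
          = if p t'.castSucc = a ∧ p t'.succ = b then
              yQpath (γ ∘ Fin.castSucc) msk q0 y p else 0 := by
        intro p
        by_cases h : p t'.castSucc = a ∧ p t'.succ = b <;>
          simp [h, ← Finset.mul_sum, seq_row]
      simp only [step2]
      have hm : (∑ p : Fin (T + 1) → (Fin S → Fin K), if p t'.castSucc = a ∧ p t'.succ = b then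
            yQpath (γ ∘ Fin.castSucc) msk q0 y p else 0)
          = yJoint (γ ∘ Fin.castSucc) msk q0 t' y a b := rfl
      rw [hm, ih (γ ∘ Fin.castSucc) t' y a b]
      have hval : (Fin.castSucc t').val = t'.val := rfl
      rw [hval]
      have : γ (Fin.castSucc t') = (γ ∘ Fin.castSucc) t' := rfl
      rw [this, seqA_congr _ _ msk q0 y t'.val
        (fun k hk => gext_castSucc γ k (hk.trans t'.isLt)) a]

lemma seqA_fac {K S : ℕ} {β : Type*} (γn : ℕ → ℝ) (msk : Fin K)
    (q0 : (Fin S → Fin K) × β → ℝ) (qY : β → ℝ) (r : Fin S → β → Fin K → ℝ) (y : β)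
    (hfac : ∀ x, q0 (x, y) = qY y * ∏ i, r i y (x i)) :
    ∀ n (b : Fin S → Fin K),
      seqA γn msk q0 y n b = qY y * ∏ i, tokA γn msk (r i y) n (b i) := by
  intro n
  induction n with
  | zero => intro b; exact hfac b
  | succ n ih =>
    intro b
    show (∑ a, seqA γn msk q0 y n a * seqStep (γn n) msk a b) = _
    calc (∑ a, seqA γn msk q0 y n a * seqStep (γn n) msk a b)
        = ∑ a : Fin S → Fin K, qY y *
            ∏ i, (tokA γn msk (r i y) n (a i) * tokStep (γn n) msk (a i) (b i)) := by
          refine Finset.sum_congr rfl fun a _ => ?_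
          rw [ih a, seqStep, mul_assoc, ← Finset.prod_mul_distrib]
      _ = qY y * ∑ a : Fin S → Fin K,
            ∏ i, (tokA γn msk (r i y) n (a i) * tokStep (γn n) msk (a i) (b i)) := by
          rw [Finset.mul_sum]
      _ = qY y * ∏ i, ∑ u, tokA γn msk (r i y) n u * tokStep (γn n) msk u (b i) := by
          rw [Fintype.prod_sum fun i u => tokA γn msk (r i y) n u * tokStep (γn n) msk u (b i)]
      _ = qY y * ∏ i, tokA γn msk (r i y) (n + 1) (b i) := rfl


/-- If the conditional distribution of `X₀` given `Y = y` factorizes across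
positions, `q_{0|y}(x|y) = ∏ᵢ qⁱ_{0|y}(xⁱ|y)`, then for the masked forward chain the conditional
reverse transitions `q_{t−1|t,y}(· | x_t, y)` also factorize across positions, for every `t`. -/
theorem stmt_14 {K S T : ℕ} {β : Type*} [Fintype β] [DecidableEq β]
    (γ : Fin T → ℝ) (hγ : ∀ t, γ t ∈ Set.Icc (0 : ℝ) 1)
    (msk : Fin (K + 1)) (hmsk : msk = Fin.last K)
    (q0 : (Fin S → Fin (K + 1)) × β → ℝ)
    (hq00 : ∀ z, 0 ≤ q0 z) (hq01 : ∑ z, q0 z = 1)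
    (qY : β → ℝ) (r : Fin S → β → Fin (K + 1) → ℝ)
    (hr0 : ∀ i y v, 0 ≤ r i y v) (hr1 : ∀ i y, ∑ v, r i y v = 1)
    (hfac : ∀ x y, q0 (x, y) = qY y * ∏ i, r i y (x i)) :
    ∀ (t : Fin T) (y : β) (b : Fin S → Fin (K + 1)),
      yMarg γ msk q0 t.succ y b ≠ 0 →
      ∃ g : Fin S → Fin (K + 1) → ℝ,
        ∀ a, yJoint γ msk q0 t y a b / yMarg γ msk q0 t.succ y b = ∏ i, g i (a i) := by
  intro t y b hD
  set γn : ℕ → ℝ := gext T γ with hγn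
  have hγt : γn t.val = γ t := by
    simp [hγn, gext, t.isLt]
  have hM : yMarg γ msk q0 t.succ y b = seqA γn msk q0 y (t.val + 1) b := by
    have h := margA msk q0 T γ t.succ y b
    rwa [Fin.val_succ] at h
  have hMf : seqA γn msk q0 y (t.val + 1) b
      = qY y * ∏ i, tokA γn msk (r i y) (t.val + 1) (b i) :=
    seqA_fac γn msk q0 qY r y (fun x => hfac x y) (t.val + 1) b
  set D : Fin S → ℝ := fun i => tokA γn msk (r i y) (t.val + 1) (b i) with hDdef
  have hDne : qY y ≠ 0 ∧ ∀ i, D i ≠ 0 := by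
    rw [hM, hMf] at hD
    constructor
    · intro h; exact hD (by rw [h, zero_mul])
    · intro i hi
      apply hD
      rw [mul_eq_zero]
      exact Or.inr (Finset.prod_eq_zero (Finset.mem_univ i) hi)
  refine ⟨fun i v => tokA γn msk (r i y) t.val v * tokStep (γ t) msk v (b i) / D i, fun a => ?_⟩
  have hJ : yJoint γ msk q0 t y a b
      = seqA γn msk q0 y t.val a * seqStep (γ t) msk a b := jointA msk q0 T γ t y a b
  have hNf : seqA γn msk q0 y t.val a = qY y * ∏ i, tokA γn msk (r i y) t.val (a i) :=
    seqA_fac γn msk q0 qY r y (fun x => hfac x y) t.val a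
  rw [hJ, hM, hMf, hNf, seqStep]
  simp only [Finset.prod_div_distrib, Finset.prod_mul_distrib]
  rw [mul_assoc]
  exact mul_div_mul_left _ _ hDne.1
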